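/- For every M ∈ ℕ and every ε > 0, for almost all multisequences a ∈ ((F_q)^M)^ℕ: −ε < liminf_{n→∞} d_a(n)/n ≤ limsup_{n→∞} d_a(n)/n < ε. -/

import Mathlib

open scoped ENNReal
open Filter MeasureTheory

namespace MSeq

/-- The joint linear complexity `L_a(n)` of a multisequence `a` over `F`
(rows indexed from `1`; the value `a 0` is irrelevant): the least
`L ∈ {0,…,n}` for which there exist `c_1,…,c_L ∈ F` with
`a_{k,m} = ∑_{i=1}^{L} c_i·a_{k−i,m}` for all `L < k ≤ n` and `1 ≤ m ≤ M`. -/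
noncomputable def LC (M : ℕ) (F : Type*) [Field F] (a : ℕ → Fin M → F)
    (n : ℕ) : ℕ :=
  sInf {L | L ≤ n ∧ ∃ c : ℕ → F, ∀ k, L < k → k ≤ n → ∀ m : Fin M,
    a k m = ∑ i ∈ Finset.Icc 1 L, c i * a (k - i) m}

/-- The linear complexity deviation `d_a(n) = L_a(n) − ⌈n·M/(M+1)⌉`. -/
noncomputable def dev (M : ℕ) (F : Type*) [Field F] (a : ℕ → Fin M → F)
    (n : ℕ) : ℤ :=
  (LC M F a n : ℤ) - ⌈((n : ℚ) * (M : ℚ)) / ((M : ℚ) + 1)⌉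

/-- `μ` is the product probability measure on `((F^M))^ℕ` of the uniform
distribution on `F^M` (Haar measure): every finite cylinder over a set `J` of
coordinates has measure `(q^M)^{−|J|}`. -/
def IsUniformProduct {M : ℕ} {F : Type*} [Fintype F] [MeasurableSpace F]
    (μ : Measure (ℕ → Fin M → F)) : Prop :=
  ∀ (J : Finset ℕ) (x : ℕ → Fin M → F),
    μ {a | ∀ j ∈ J, a j = x j} = (((Fintype.card F : ℝ≥0∞)) ^ M)⁻¹ ^ J.card

end MSeq

namespace MSeqAux
open MSeq

variable {M : ℕ} {F : Type*} [Field F]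

noncomputable def gen (ℓ : ℕ) (c : ℕ → F) (init : ℕ → Fin M → F) : ℕ → Fin M → F
  | k => if k ≤ ℓ then init k else fun m =>
      ∑ i ∈ (Finset.Icc 1 ℓ).attach, c i.1 * gen ℓ c init (k - i.1) m
  termination_by k => k
  decreasing_by
    have := (Finset.mem_Icc.mp i.2).1
    omega

lemma gen_le {ℓ : ℕ} {c : ℕ → F} {init : ℕ → Fin M → F} {k : ℕ} (h : k ≤ ℓ) :
    gen ℓ c init k = init k := by rw [gen, if_pos h]

lemma gen_gt {ℓ : ℕ} {c : ℕ → F} {init : ℕ → Fin M → F} {k : ℕ} (h : ¬ k ≤ ℓ) (m : Fin M) :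
    gen ℓ c init k m = ∑ i ∈ Finset.Icc 1 ℓ, c i * gen ℓ c init (k - i) m := by
  conv_lhs => rw [gen]
  rw [if_neg h]
  exact Finset.sum_attach _ (fun i => c i * gen ℓ c init (k - i) m)

lemma gen_eq_self {ℓ n : ℕ} {c c' : ℕ → F} {init : ℕ → Fin M → F} {a : ℕ → Fin M → F}
    (hc : ∀ i ∈ Finset.Icc 1 ℓ, c' i = c i)
    (hinit : ∀ k ≤ ℓ, init k = a k)
    (hrec : ∀ k, ℓ < k → k ≤ n → ∀ m, a k m = ∑ i ∈ Finset.Icc 1 ℓ, c i * a (k - i) m) :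
    ∀ k, k ≤ n → gen ℓ c' init k = a k := by
  intro k
  induction k using Nat.strong_induction_on with
  | _ k ih =>
    intro hkn
    by_cases h : k ≤ ℓ
    · rw [gen_le h]; exact hinit k h
    · funext m
      rw [gen_gt h m, hrec k (by omega) hkn m]
      refine Finset.sum_congr rfl fun i hi => ?_
      have h1 := (Finset.mem_Icc.mp hi).1
      rw [hc i hi, ih (k - i) (by omega) (by omega)]

lemma LC_le_self (a : ℕ → Fin M → F) (n : ℕ) : LC M F a n ≤ n :=
  Nat.sInf_le ⟨le_rfl, 0, fun k hk hk' => by omega⟩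

lemma LC_mem (a : ℕ → Fin M → F) (n : ℕ) :
    LC M F a n ≤ n ∧ ∃ c : ℕ → F, ∀ k, LC M F a n < k → k ≤ n → ∀ m : Fin M,
      a k m = ∑ i ∈ Finset.Icc 1 (LC M F a n), c i * a (k - i) m :=
  Nat.sInf_mem (s := {L | L ≤ n ∧ ∃ c : ℕ → F, ∀ k, L < k → k ≤ n → ∀ m : Fin M,
    a k m = ∑ i ∈ Finset.Icc 1 L, c i * a (k - i) m})
    ⟨n, le_rfl, 0, fun k hk hk' => by omega⟩

end MSeqAux
namespace MSeqAux
open MSeq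

variable {M : ℕ} {F : Type*} [Field F] [Fintype F] [MeasurableSpace F]
  {μ : MeasureTheory.Measure (ℕ → Fin M → F)}

omit [Fintype F] [MeasurableSpace F] in
lemma LC_le_of {a : ℕ → Fin M → F} {n ℓ : ℕ} (h : ℓ ≤ n) (c : ℕ → F)
    (hc : ∀ k, ℓ < k → k ≤ n → ∀ m : Fin M,
      a k m = ∑ i ∈ Finset.Icc 1 ℓ, c i * a (k - i) m) : LC M F a n ≤ ℓ :=
  Nat.sInf_le ⟨h, c, hc⟩

lemma pow_mul_inv_pow (x : ℝ≥0∞) (hx0 : x ≠ 0) (hxt : x ≠ ⊤) {a b : ℕ} (h : a ≤ b) :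
    x ^ a * (x ^ b)⁻¹ = (x⁻¹) ^ (b - a) := by
  have hb : b = (b - a) + a := by omega
  rw [hb, pow_add, ENNReal.mul_inv (Or.inl (pow_ne_zero _ hx0))
      (Or.inl (ENNReal.pow_ne_top hxt)),
    mul_comm ((x ^ (b - a))⁻¹) ((x ^ a)⁻¹), ← mul_assoc,
    ENNReal.mul_inv_cancel (pow_ne_zero _ hx0) (ENNReal.pow_ne_top hxt),
    one_mul, ENNReal.inv_pow]
  congr 1
  omega

lemma lowerTail (hμ : IsUniformProduct μ) {ℓ n : ℕ} (hln : ℓ ≤ n) :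
    μ {a | LC M F a n ≤ ℓ} ≤
      (Fintype.card F : ℝ≥0∞) ^ ((M + 1) * ℓ + M) *
        ((Fintype.card F : ℝ≥0∞) ^ (M * n))⁻¹ := by
  classical
  set q : ℝ≥0∞ := (Fintype.card F : ℝ≥0∞) with hq
  set cExt : (Fin ℓ → F) → ℕ → F :=
    fun c i => if h : i - 1 < ℓ then c ⟨i - 1, h⟩ else 0 with hcExt
  set iExt : (Fin (ℓ + 1) → Fin M → F) → ℕ → Fin M → F :=
    fun v k => if h : k < ℓ + 1 then v ⟨k, h⟩ else 0 with hiExt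
  set t : ((Fin ℓ → F) × (Fin (ℓ + 1) → Fin M → F)) → Set (ℕ → Fin M → F) :=
    fun p => {a | ∀ j ∈ Finset.Icc 1 n, a j = gen ℓ (cExt p.1) (iExt p.2) j} with ht
  have hsub : {a | LC M F a n ≤ ℓ} ⊆
      ⋃ p ∈ (Finset.univ : Finset ((Fin ℓ → F) × (Fin (ℓ + 1) → Fin M → F))), t p := by
    intro a ha
    simp only [Set.mem_setOf_eq] at ha
    obtain ⟨hLn, c, hc⟩ := LC_mem a n
    set L := LC M F a n
    set c2 : ℕ → F := fun i => if i ≤ L then c i else 0 with hc2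
    have hrec : ∀ k, ℓ < k → k ≤ n → ∀ m : Fin M,
        a k m = ∑ i ∈ Finset.Icc 1 ℓ, c2 i * a (k - i) m := by
      intro k hk hkn m
      rw [hc k (by omega) hkn m]
      have e1 : ∑ i ∈ Finset.Icc 1 L, c i * a (k - i) m
          = ∑ i ∈ Finset.Icc 1 L, c2 i * a (k - i) m := by
        refine Finset.sum_congr rfl fun i hi => ?_
        have h2 := (Finset.mem_Icc.mp hi).2
        simp only [hc2]; rw [if_pos h2]
      rw [e1]
      refine Finset.sum_subset (Finset.Icc_subset_Icc_right ha) fun i hi hni => ?_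
      have h1 := (Finset.mem_Icc.mp hi).1
      have h2 : ¬ i ≤ L := fun hcon => hni (Finset.mem_Icc.mpr ⟨h1, hcon⟩)
      simp only [hc2]; rw [if_neg h2, zero_mul]
    refine Set.mem_biUnion (Finset.mem_univ
      ((fun i : Fin ℓ => c2 (i + 1), fun k : Fin (ℓ + 1) => a k))) ?_
    have hgen := gen_eq_self (c := c2)
      (c' := cExt (fun i : Fin ℓ => c2 (i + 1)))
      (init := iExt (fun k : Fin (ℓ + 1) => a k)) (a := a)
      (by
        intro i hi
        obtain ⟨h1, h2⟩ := Finset.mem_Icc.mp hi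
        have hlt : i - 1 < ℓ := by omega
        simp only [hcExt, dif_pos hlt]
        congr 1
        omega)
      (by
        intro k hk
        have hlt : k < ℓ + 1 := by omega
        simp [hiExt, dif_pos hlt]
        intro h; omega)
      hrec
    intro j hj
    exact (hgen j (Finset.mem_Icc.mp hj).2).symm
  have hcard : ((Fintype.card ((Fin ℓ → F) × (Fin (ℓ + 1) → Fin M → F))) : ℝ≥0∞)
      = q ^ ((M + 1) * ℓ + M) := by
    simp only [Fintype.card_prod, Fintype.card_fun, Fintype.card_fin]
    push_cast
    rw [← pow_mul, ← pow_add]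
    ring_nf
    rw [hq]
  calc μ {a | LC M F a n ≤ ℓ}
      ≤ ∑ p ∈ (Finset.univ : Finset ((Fin ℓ → F) × (Fin (ℓ + 1) → Fin M → F))), μ (t p) :=
        le_trans (MeasureTheory.measure_mono hsub)
          (MeasureTheory.measure_biUnion_finset_le _ _)
    _ = ∑ _p ∈ (Finset.univ : Finset ((Fin ℓ → F) × (Fin (ℓ + 1) → Fin M → F))),
          ((q ^ M)⁻¹) ^ n := by
        refine Finset.sum_congr rfl fun p _ => ?_
        have := hμ (Finset.Icc 1 n) (gen ℓ (cExt p.1) (iExt p.2))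
        simpa [ht, Nat.card_Icc] using this
    _ = ((Fintype.card ((Fin ℓ → F) × (Fin (ℓ + 1) → Fin M → F))) : ℝ≥0∞)
          * ((q ^ M)⁻¹) ^ n := by
        rw [Finset.sum_const, nsmul_eq_mul, Finset.card_univ]
    _ = q ^ ((M + 1) * ℓ + M) * (q ^ (M * n))⁻¹ := by
        rw [hcard, ENNReal.inv_pow, ENNReal.inv_pow, ← pow_mul]

end MSeqAux
namespace MSeqAux
open MSeq

variable {F : Type*} [Field F]

lemma exists_left_annihilator {κ ρ : Type*} [Fintype κ] [Fintype ρ] [DecidableEq κ]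
    [DecidableEq ρ] (A : Matrix ρ κ F) (b : ρ → F) (h : ¬ ∃ c : κ → F, A.mulVec c = b) :
    ∃ lam : ρ → F, lam ≠ 0 ∧ ∀ i : κ, ∑ rm : ρ, lam rm * A rm i = 0 := by
  have hb : b ∉ LinearMap.range (Matrix.mulVecLin A) := by
    intro hmem
    obtain ⟨c, hc⟩ := hmem
    exact h ⟨c, hc⟩
  obtain ⟨f, hfb, hmap⟩ := Submodule.exists_dual_map_eq_bot_of_notMem hb inferInstance
  set lam : ρ → F := fun rm => f (fun rm' => if rm = rm' then 1 else 0) with hlamdef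
  have hf : ∀ x : ρ → F, f x = ∑ rm : ρ, x rm * lam rm := by
    intro x
    conv_lhs => rw [pi_eq_sum_univ x]
    rw [map_sum]
    refine Finset.sum_congr rfl fun rm _ => ?_
    rw [_root_.map_smul, smul_eq_mul]
  refine ⟨lam, ?_, ?_⟩
  · intro hlam
    apply hfb
    rw [hf b, hlam]
    simp
  · intro i
    have hcol : (fun rm => A rm i) ∈ LinearMap.range (Matrix.mulVecLin A) := by
      refine ⟨fun j => if i = j then 1 else 0, ?_⟩
      ext rm
      simp [Matrix.mulVecLin_apply, Matrix.mulVec, dotProduct, mul_ite]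
    have hf0 : f (fun rm => A rm i) = 0 := by
      have hmem : f (fun rm => A rm i) ∈
          (LinearMap.range (Matrix.mulVecLin A)).map f := Submodule.mem_map_of_mem hcol
      rw [hmap] at hmem
      simpa using hmem
    rw [hf] at hf0
    rw [← hf0]
    exact Finset.sum_congr rfl fun rm _ => mul_comm _ _

end MSeqAux
namespace MSeqAux
open MSeq

variable {M : ℕ} {F : Type*} [Field F] [Fintype F] [MeasurableSpace F]
  {μ : MeasureTheory.Measure (ℕ → Fin M → F)}

lemma count_bound (hμ : IsUniformProduct μ) (hM : 1 ≤ M) {ℓ n : ℕ} (hn : ℓ < n)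
    (lam : Fin (n - ℓ) × Fin M → F) (hlam : lam ≠ 0) :
    μ {a | ∀ i : Fin ℓ, ∑ rm : Fin (n - ℓ) × Fin M,
        lam rm * a (ℓ + rm.1.1 - i.1) rm.2 = 0} ≤
      ((Fintype.card F : ℝ≥0∞) ^ ℓ)⁻¹ := by
  classical
  set q : ℝ≥0∞ := (Fintype.card F : ℝ≥0∞) with hq
  have hq0 : q ≠ 0 := by
    rw [hq]; exact_mod_cast Nat.cast_ne_zero.mpr Fintype.card_ne_zero
  have hqt : q ≠ ⊤ := ENNReal.natCast_ne_top _
  -- pick the maximal row with a nonzero entry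
  obtain ⟨rm1, hrm1⟩ : ∃ rm, lam rm ≠ 0 := by
    by_contra hcon
    push_neg at hcon
    exact hlam (funext hcon)
  set s : Finset (Fin (n - ℓ)) :=
    Finset.univ.filter (fun r => ∃ m, lam (r, m) ≠ 0) with hs
  have hsne : s.Nonempty := ⟨rm1.1, by
    simp only [hs, Finset.mem_filter, Finset.mem_univ, true_and]
    exact ⟨rm1.2, by simpa using hrm1⟩⟩
  set r0 := s.max' hsne with hr0
  obtain ⟨m0, hm0⟩ : ∃ m, lam (r0, m) ≠ 0 := by
    have := s.max'_mem hsne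
    simp only [hs, Finset.mem_filter, Finset.mem_univ, true_and] at this
    exact this
  have hmax : ∀ r m, r0 < r → lam (r, m) = 0 := by
    intro r m hr
    by_contra hc
    exact absurd (s.le_max' r (by
      simp only [hs, Finset.mem_filter, Finset.mem_univ, true_and]
      exact ⟨m, hc⟩)) (not_le.mpr hr)
  -- index translation
  set vidx : Fin (n - ℓ) → Fin ℓ → Fin n :=
    fun r i => ⟨ℓ + r.1 - i.1, by have := r.2; omega⟩ with hvidx
  set sol : (Fin n → Fin M → F) → Prop :=
    fun x => ∀ i : Fin ℓ, ∑ rm : Fin (n - ℓ) × Fin M,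
      lam rm * x (vidx rm.1 i) rm.2 = 0 with hsol
  set S : Finset (Fin n → Fin M → F) := Finset.univ.filter sol with hS
  set ext : (Fin n → Fin M → F) → ℕ → Fin M → F :=
    fun x j => if h : j < n then x ⟨j, h⟩ else 0 with hext
  -- covering by cylinders
  have hsub : {a : ℕ → Fin M → F | ∀ i : Fin ℓ, ∑ rm : Fin (n - ℓ) × Fin M,
      lam rm * a (ℓ + rm.1.1 - i.1) rm.2 = 0} ⊆
      ⋃ x ∈ S, {a : ℕ → Fin M → F | ∀ j ∈ Finset.range n, a j = ext x j} := by
    intro a ha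
    simp only [Set.mem_setOf_eq] at ha
    refine Set.mem_biUnion (show (fun t : Fin n => a t.1) ∈ S from ?_) ?_
    · simp only [hS, Finset.mem_filter, Finset.mem_univ, true_and, hsol]
      intro i
      exact ha i
    · intro j hj
      have hjn : j < n := Finset.mem_range.mp hj
      simp only [hext, dif_pos hjn]
  -- the special coordinates
  set D : Finset (Fin n × Fin M) :=
    (Finset.univ : Finset (Fin ℓ)).image (fun i => (vidx r0 i, m0)) with hD
  have hvinj : Function.Injective (fun i : Fin ℓ => ((vidx r0 i, m0) : Fin n × Fin M)) := by
    intro i1 i2 heq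
    have h0 : vidx r0 i1 = vidx r0 i2 := congrArg Prod.fst heq
    have h1 := congrArg Fin.val h0
    simp only [hvidx] at h1
    have e1 := i1.2; have e2 := i2.2
    exact Fin.ext (by omega)
  have hDcard : D.card = ℓ := by
    rw [hD, Finset.card_image_of_injective _ hvinj, Finset.card_univ, Fintype.card_fin]
  -- key uniqueness induction
  have key : ∀ (x y : Fin n → Fin M → F), sol x → sol y →
      (∀ p : Fin n × Fin M, p ∉ D → x p.1 p.2 = y p.1 p.2) →
      ∀ d : ℕ, ∀ i : Fin ℓ, ℓ - i.1 ≤ d → x (vidx r0 i) m0 = y (vidx r0 i) m0 := by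
    intro x y hx hy hoff d
    induction d with
    | zero => intro i hi; have := i.2; omega
    | succ d ih =>
      intro i hi
      have hsum : ∑ rm : Fin (n - ℓ) × Fin M,
          (lam rm * x (vidx rm.1 i) rm.2 - lam rm * y (vidx rm.1 i) rm.2) = 0 := by
        rw [Finset.sum_sub_distrib, hx i, hy i, sub_zero]
      rw [Finset.sum_eq_single_of_mem ((r0, m0) : Fin (n - ℓ) × Fin M)
        (Finset.mem_univ _) ?_] at hsum
      · rw [← mul_sub] at hsum
        rcases mul_eq_zero.mp hsum with h | h
        · exact absurd h hm0
        · exact sub_eq_zero.mp h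
      · intro rm _ hne
        by_cases hDm : ((vidx rm.1 i, rm.2) : Fin n × Fin M) ∈ D
        · obtain ⟨i', _, heq⟩ := Finset.mem_image.mp hDm
          have hm : rm.2 = m0 := (Prod.ext_iff.mp heq).2.symm
          have hval : ℓ + r0.1 - i'.1 = ℓ + rm.1.1 - i.1 := by
            have := (Prod.ext_iff.mp heq).1
            have := congrArg Fin.val this
            simpa [hvidx] using this
          by_cases hr : r0 < rm.1
          · have hz : lam rm = 0 := by
              have : lam (rm.1, rm.2) = 0 := hm ▸ hmax rm.1 m0 hr
              simpa using this
            rw [hz, zero_mul, zero_mul, sub_zero]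
          · have hr' : rm.1.1 ≤ r0.1 := by
              have := Fin.not_lt.mp hr
              exact Fin.le_def.mp this
            have e1 := i.2; have e2 := i'.2; have e3 := r0.2; have e4 := rm.1.2
            by_cases hii : i'.1 = i.1
            · exfalso
              have hreq : rm.1.1 = r0.1 := by omega
              exact hne (Prod.ext (Fin.ext hreq) hm)
            · have hgt : i.1 < i'.1 := by omega
              have hxy := ih i' (by omega)
              have hfin : vidx rm.1 i = vidx r0 i' := Fin.ext (by
                simp only [hvidx]
                omega)
              rw [hm, hfin, hxy, sub_self]
        · rw [hoff (vidx rm.1 i, rm.2) hDm, sub_self]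
  -- injection into free coordinates
  have hinj : Function.Injective
      (fun (x : {x : Fin n → Fin M → F // sol x})
           (p : {p : Fin n × Fin M // p ∉ D}) => x.1 p.1.1 p.1.2) := by
    intro x y h
    have hoff : ∀ p : Fin n × Fin M, p ∉ D → x.1 p.1 p.2 = y.1 p.1 p.2 := by
      intro p hp
      exact congrFun h ⟨p, hp⟩
    apply Subtype.ext
    funext t m
    by_cases hDm : ((t, m) : Fin n × Fin M) ∈ D
    · obtain ⟨i, _, heq⟩ := Finset.mem_image.mp hDm
      have h1 : vidx r0 i = t := (Prod.ext_iff.mp heq).1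
      have h2 : m0 = m := (Prod.ext_iff.mp heq).2
      rw [← h1, ← h2]
      exact key x.1 y.1 x.2 y.2 hoff ℓ i (by omega)
    · exact hoff (t, m) hDm
  -- cardinality bound
  have hcard : (S.card : ℝ≥0∞) ≤ q ^ (n * M - ℓ) := by
    have h1 : S.card = Fintype.card {x : Fin n → Fin M → F // sol x} := by
      rw [Fintype.card_subtype]
    have h2 := Fintype.card_le_of_injective _ hinj
    have h3 : Fintype.card ({p : Fin n × Fin M // p ∉ D} → F)
        = Fintype.card F ^ (n * M - ℓ) := by
      rw [Fintype.card_fun]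
      congr 1
      rw [Fintype.card_subtype_compl, Fintype.card_prod, Fintype.card_fin, Fintype.card_fin]
      congr 1
      have := Fintype.card_coe D
      simp only [this, hDcard]
    rw [h1]
    calc (Fintype.card {x : Fin n → Fin M → F // sol x} : ℝ≥0∞)
        ≤ (Fintype.card ({p : Fin n × Fin M // p ∉ D} → F) : ℝ≥0∞) := by
          exact_mod_cast h2
      _ = q ^ (n * M - ℓ) := by rw [h3]; push_cast; rfl
  -- put it together
  calc μ {a : ℕ → Fin M → F | ∀ i : Fin ℓ, ∑ rm : Fin (n - ℓ) × Fin M,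
      lam rm * a (ℓ + rm.1.1 - i.1) rm.2 = 0}
      ≤ ∑ x ∈ S, μ {a : ℕ → Fin M → F | ∀ j ∈ Finset.range n, a j = ext x j} :=
        le_trans (MeasureTheory.measure_mono hsub)
          (MeasureTheory.measure_biUnion_finset_le _ _)
    _ = ∑ _x ∈ S, ((q ^ M)⁻¹) ^ n := by
        refine Finset.sum_congr rfl fun x _ => ?_
        have := hμ (Finset.range n) (ext x)
        simpa [Finset.card_range] using this
    _ = (S.card : ℝ≥0∞) * ((q ^ M)⁻¹) ^ n := by
        rw [Finset.sum_const, nsmul_eq_mul]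
    _ ≤ q ^ (n * M - ℓ) * (q ^ (n * M))⁻¹ := by
        rw [show ((q ^ M)⁻¹) ^ n = (q ^ (n * M))⁻¹ by
          rw [← ENNReal.inv_pow, ← pow_mul, Nat.mul_comm M n, ENNReal.inv_pow]]
        exact mul_le_mul_left hcard _
    _ = (q ^ ℓ)⁻¹ := by
        rw [pow_mul_inv_pow q hq0 hqt (by omega), ENNReal.inv_pow]
        congr 1
        have : ℓ ≤ n * M := le_trans (le_of_lt hn) (Nat.le_mul_of_pos_right n (by omega))
        omega

end MSeqAux
namespace MSeqAux
open MSeq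

variable {M : ℕ} {F : Type*} [Field F] [Fintype F] [MeasurableSpace F]
  {μ : MeasureTheory.Measure (ℕ → Fin M → F)}

lemma upperTail (hμ : IsUniformProduct μ) (hM : 1 ≤ M) {ℓ n : ℕ} (hn : ℓ < n) :
    μ {a | ℓ < LC M F a n} ≤
      (Fintype.card F : ℝ≥0∞) ^ (M * (n - ℓ)) * ((Fintype.card F : ℝ≥0∞) ^ ℓ)⁻¹ := by
  classical
  set q : ℝ≥0∞ := (Fintype.card F : ℝ≥0∞) with hq
  set E : (Fin (n - ℓ) × Fin M → F) → Set (ℕ → Fin M → F) :=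
    fun lam => {a | ∀ i : Fin ℓ, ∑ rm : Fin (n - ℓ) × Fin M,
      lam rm * a (ℓ + rm.1.1 - i.1) rm.2 = 0} with hE
  have hsub : {a | ℓ < LC M F a n} ⊆
      ⋃ lam ∈ Finset.univ.filter (fun lam : Fin (n - ℓ) × Fin M → F => lam ≠ 0),
        E lam := by
    intro a ha
    simp only [Set.mem_setOf_eq] at ha
    have hnosol : ¬ ∃ c : Fin ℓ → F,
        (Matrix.of fun (rm : Fin (n - ℓ) × Fin M) (i : Fin ℓ) =>
          a (ℓ + rm.1.1 - i.1) rm.2).mulVec c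
          = (fun rm : Fin (n - ℓ) × Fin M => a (ℓ + 1 + rm.1.1) rm.2) := by
      rintro ⟨c, hc⟩
      set c' : ℕ → F := fun i => if h : i - 1 < ℓ then c ⟨i - 1, h⟩ else 0 with hc'
      have hle : LC M F a n ≤ ℓ := by
        refine LC_le_of (le_of_lt hn) c' ?_
        intro k hk hkn m
        have hr : k - ℓ - 1 < n - ℓ := by omega
        have hrow := congrFun hc (⟨k - ℓ - 1, hr⟩, m)
        simp only [Matrix.mulVec, dotProduct] at hrow
        have hb : a (ℓ + 1 + (k - ℓ - 1)) m = a k m := by congr 1; omega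
        rw [hb] at hrow
        rw [← hrow, show Finset.Icc 1 ℓ = Finset.Ico 1 (ℓ + 1) from (Finset.Ico_add_one_right_eq_Icc 1 ℓ).symm,
          Finset.sum_Ico_eq_sum_range, show ℓ + 1 - 1 = ℓ from rfl,
          ← Fin.sum_univ_eq_sum_range (fun j => c' (1 + j) * a (k - (1 + j)) m) ℓ]
        refine Finset.sum_congr rfl fun i _ => ?_
        have hi2 := i.2
        have h1 : (1 : ℕ) + i.1 - 1 < ℓ := by omega
        have hcc : c' (1 + i.1) = c i := by
          simp only [hc']
          rw [dif_pos h1]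
          exact congrArg c (Fin.ext (show (1 : ℕ) + i.1 - 1 = i.1 by omega))
        show a (ℓ + (k - ℓ - 1) - i.1) m * c i = c' (1 + i.1) * a (k - (1 + i.1)) m
        rw [hcc, mul_comm]
        congr 2
        omega
      omega
    obtain ⟨lam, hlam0, hlamA⟩ := exists_left_annihilator _ _ hnosol
    refine Set.mem_biUnion (x := lam)
      (Finset.mem_coe.mpr (Finset.mem_filter.mpr ⟨Finset.mem_univ _, hlam0⟩)) ?_
    intro i
    exact hlamA i
  calc μ {a | ℓ < LC M F a n}
      ≤ ∑ lam ∈ Finset.univ.filter (fun lam : Fin (n - ℓ) × Fin M → F => lam ≠ 0),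
          μ (E lam) :=
        le_trans (MeasureTheory.measure_mono hsub)
          (MeasureTheory.measure_biUnion_finset_le _ _)
    _ ≤ ∑ lam ∈ Finset.univ.filter (fun lam : Fin (n - ℓ) × Fin M → F => lam ≠ 0),
          (q ^ ℓ)⁻¹ := by
        refine Finset.sum_le_sum fun lam hlam => ?_
        have h0 : lam ≠ 0 := (Finset.mem_filter.mp hlam).2
        exact count_bound hμ hM hn lam h0
    _ ≤ (Fintype.card (Fin (n - ℓ) × Fin M → F) : ℝ≥0∞) * (q ^ ℓ)⁻¹ := by
        rw [Finset.sum_const, nsmul_eq_mul]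
        refine mul_le_mul_left ?_ _
        exact_mod_cast Nat.cast_le.mpr (le_trans (Finset.card_filter_le _ _)
          (le_of_eq (Finset.card_univ)))
    _ = q ^ (M * (n - ℓ)) * (q ^ ℓ)⁻¹ := by
        congr 1
        rw [Fintype.card_fun, Fintype.card_prod, Fintype.card_fin, Fintype.card_fin]
        push_cast
        rw [Nat.mul_comm (n - ℓ) M]

end MSeqAux
namespace MSeqAux

lemma tsum_pow_div_ne_top (r : ℝ≥0∞) (hr : r < 1) (K : ℕ) (hK : K ≠ 0) :
    ∑' n : ℕ, r ^ (n / K) ≠ ⊤ := by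
  haveI : NeZero K := ⟨hK⟩
  rw [← (Nat.divModEquiv K).symm.tsum_eq (fun n => r ^ (n / K))]
  have h2 : ∀ p : ℕ × Fin K, r ^ (((Nat.divModEquiv K).symm p : ℕ) / K) = r ^ p.1 := by
    intro p
    congr 1
    show (p.1 * K + (p.2 : ℕ)) / K = p.1
    rw [Nat.mul_comm, Nat.mul_add_div (Nat.pos_of_ne_zero hK),
      Nat.div_eq_of_lt p.2.is_lt, Nat.add_zero]
  rw [tsum_congr h2, ENNReal.tsum_prod']
  have h3 : ∀ a : ℕ, ∑' _b : Fin K, r ^ a = (K : ℝ≥0∞) * r ^ a := by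
    intro a
    rw [tsum_fintype, Finset.sum_const, nsmul_eq_mul, Finset.card_univ, Fintype.card_fin]
  rw [tsum_congr h3, ENNReal.tsum_mul_left, ENNReal.tsum_geometric]
  refine ENNReal.mul_ne_top (ENNReal.natCast_ne_top K) ?_
  rw [Ne, ENNReal.inv_eq_top]
  intro h
  exact absurd (tsub_eq_zero_iff_le.mp h) (not_le.mpr hr)

end MSeqAux
namespace MSeqAux

lemma arith1 {Mv f k nv r : ℕ} (e1 : (Mv + 1) * f + r = nv * Mv)
    (hkf : k ≤ f) (hk : 1 ≤ k) : (Mv + 1) * (f - k) + Mv + k ≤ Mv * nv := by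
  have h : 0 ≤ ((k : ℤ) - 1) * (Mv : ℤ) := by
    apply mul_nonneg
    · have : (1 : ℤ) ≤ (k : ℤ) := by exact_mod_cast hk
      linarith
    · positivity
  zify [hkf]
  have e1' : ((Mv : ℤ) + 1) * (f : ℤ) + (r : ℤ) = (nv : ℤ) * (Mv : ℤ) := by
    exact_mod_cast e1
  have hr' : (0 : ℤ) ≤ (r : ℤ) := by positivity
  nlinarith [h, e1', hr']

lemma arith2 {Mv f k nv r : ℕ} (e1 : (Mv + 1) * f + r = nv * Mv) (hr : r ≤ Mv)
    (hLn : f + 2 * k + 2 < nv) :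
    Mv * (nv - (f + 2 * k + 2)) + k ≤ f + 2 * k + 2 := by
  have h : 0 ≤ (k : ℤ) * (Mv : ℤ) := by positivity
  zify [le_of_lt hLn]
  have e1' : ((Mv : ℤ) + 1) * (f : ℤ) + (r : ℤ) = (nv : ℤ) * (Mv : ℤ) := by
    exact_mod_cast e1
  have hr' : (r : ℤ) ≤ (Mv : ℤ) := by exact_mod_cast hr
  have hM0 : (0 : ℤ) ≤ (Mv : ℤ) := by positivity
  nlinarith [h, e1', hr', hM0]

end MSeqAux
namespace MSeqAux
open MSeq MeasureTheory

variable {M : ℕ} {F : Type*} [Field F] [Fintype F] [MeasurableSpace F]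
  {μ : MeasureTheory.Measure (ℕ → Fin M → F)}

lemma bad_le (hμ : IsUniformProduct μ) [IsProbabilityMeasure μ] (hM : 1 ≤ M)
    {K : ℕ} (hK : 4 * (M + 1) ≤ K) (n : ℕ) :
    μ ({a | LC M F a n ≤ n * M / (M + 1) - n / K}
        ∪ {a | n * M / (M + 1) + 2 * (n / K) + 2 < LC M F a n})
      ≤ 2 * ((Fintype.card F : ℝ≥0∞)⁻¹) ^ (n / K) := by
  classical
  set q : ℝ≥0∞ := (Fintype.card F : ℝ≥0∞) with hq
  have hq0 : q ≠ 0 := by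
    rw [hq]; exact_mod_cast Nat.cast_ne_zero.mpr Fintype.card_ne_zero
  have hqt : q ≠ ⊤ := ENNReal.natCast_ne_top _
  have hrle : q⁻¹ ≤ 1 := by
    rw [ENNReal.inv_le_one, hq]
    exact_mod_cast Nat.one_le_cast.mpr Fintype.card_pos
  set f : ℕ := n * M / (M + 1) with hfdef
  set k : ℕ := n / K with hkdef
  have e1 : (M + 1) * f + (n * M) % (M + 1) = n * M := Nat.div_add_mod (n * M) (M + 1)
  have e2 : (n * M) % (M + 1) ≤ M := by
    have := Nat.mod_lt (n * M) (y := M + 1) (by omega)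
    omega
  have hkf : k ≤ f := by
    have hk1 : k ≤ n / (M + 1) := Nat.div_le_div_left (by omega) (by omega)
    have hk2 : n / (M + 1) ≤ n * M / (M + 1) :=
      Nat.div_le_div_right (Nat.le_mul_of_pos_right n (by omega))
    exact le_trans hk1 hk2
  have hfn : f ≤ n := by
    calc n * M / (M + 1) ≤ n * (M + 1) / (M + 1) :=
          Nat.div_le_div_right (Nat.mul_le_mul_left n (by omega))
      _ = n := Nat.mul_div_cancel n (by omega)
  obtain ⟨r, hr⟩ : ∃ r, (n * M) % (M + 1) = r := ⟨_, rfl⟩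
  rw [hr] at e1 e2
  clear_value f k
  clear hfdef hkdef hr
  refine le_trans (measure_union_le _ _) (le_trans (add_le_add
    (a := μ {a | LC M F a n ≤ f - k}) (b := (q⁻¹) ^ k)
    (c := μ {a | f + 2 * k + 2 < LC M F a n}) (d := (q⁻¹) ^ k) ?_ ?_)
    (le_of_eq (two_mul _).symm))
  · by_cases hk0 : k = 0
    · rw [hk0, pow_zero]
      exact prob_le_one
    · have harith : (M + 1) * (f - k) + M + k ≤ M * n :=
        arith1 e1 hkf (Nat.one_le_iff_ne_zero.mpr hk0)
      calc μ {a | LC M F a n ≤ f - k}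
          ≤ q ^ ((M + 1) * (f - k) + M) * (q ^ (M * n))⁻¹ :=
            lowerTail hμ (le_trans (Nat.sub_le _ _) hfn)
        _ = (q⁻¹) ^ (M * n - ((M + 1) * (f - k) + M)) := pow_mul_inv_pow q hq0 hqt (by
            generalize (M + 1) * (f - k) = X at harith ⊢
            generalize M * n = Z at harith ⊢
            omega)
        _ ≤ (q⁻¹) ^ k := pow_le_pow_right_of_le_one' hrle (by
            generalize (M + 1) * (f - k) = X at harith ⊢
            generalize M * n = Z at harith ⊢
            omega)
  · by_cases hnL : f + 2 * k + 2 < n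
    · have harith2 := arith2 e1 e2 hnL
      calc μ {a | f + 2 * k + 2 < LC M F a n}
          ≤ q ^ (M * (n - (f + 2 * k + 2))) * (q ^ (f + 2 * k + 2))⁻¹ :=
            upperTail hμ hM hnL
        _ = (q⁻¹) ^ ((f + 2 * k + 2) - M * (n - (f + 2 * k + 2))) :=
            pow_mul_inv_pow q hq0 hqt (by
              generalize M * (n - (f + 2 * k + 2)) = X at harith2 ⊢
              omega)
        _ ≤ (q⁻¹) ^ k := pow_le_pow_right_of_le_one' hrle (by
              generalize M * (n - (f + 2 * k + 2)) = X at harith2 ⊢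
              omega)
    · have hempty : {a : ℕ → Fin M → F | f + 2 * k + 2 < LC M F a n} = ∅ := by
        ext a
        simp only [Set.mem_setOf_eq, Set.mem_empty_iff_false, iff_false, not_lt]
        exact le_trans (LC_le_self a n) (by omega)
      rw [hempty, measure_empty]
      exact zero_le

end MSeqAux
open MSeq MeasureTheory in
/-- For every `M ∈ ℕ` and every `ε > 0`, for almost all
multisequences `a ∈ ((F_q)^M)^ℕ`:
`−ε < liminf_{n→∞} d_a(n)/n ≤ limsup_{n→∞} d_a(n)/n < ε`. -/
theorem deviation_over_n_small (M : ℕ) (hM : 1 ≤ M)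
    (F : Type*) [Field F] [Fintype F] [MeasurableSpace F]
    (μ : Measure (ℕ → Fin M → F)) [IsProbabilityMeasure μ]
    (hμ : IsUniformProduct μ) (ε : ℝ) (hε : 0 < ε) :
    ∀ᵐ a ∂μ,
      -ε < Filter.liminf (fun n : ℕ => (dev M F a n : ℝ) / n) Filter.atTop
      ∧ Filter.liminf (fun n : ℕ => (dev M F a n : ℝ) / n) Filter.atTop
          ≤ Filter.limsup (fun n : ℕ => (dev M F a n : ℝ) / n) Filter.atTop
      ∧ Filter.limsup (fun n : ℕ => (dev M F a n : ℝ) / n) Filter.atTop < ε := by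
  classical
  have hq2 : 1 < Fintype.card F := Fintype.one_lt_card
  set K : ℕ := ⌈(4 : ℝ) / ε⌉₊ + 4 * (M + 1) with hKdef
  have hK4 : 4 * (M + 1) ≤ K := Nat.le_add_left _ _
  have hKpos : 0 < K := by omega
  have hKe : (4 : ℝ) / ε ≤ (K : ℝ) := by
    refine le_trans (Nat.le_ceil _) ?_
    exact_mod_cast Nat.le_add_right _ _
  set Bad : ℕ → Set (ℕ → Fin M → F) := fun n =>
    {a | LC M F a n ≤ n * M / (M + 1) - n / K}
      ∪ {a | n * M / (M + 1) + 2 * (n / K) + 2 < LC M F a n} with hBad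
  have hsum : ∑' n, μ (Bad n) ≠ ⊤ := by
    refine ne_top_of_le_ne_top ?_ (ENNReal.tsum_le_tsum (fun n => MSeqAux.bad_le hμ hM hK4 n))
    rw [ENNReal.tsum_mul_left]
    refine ENNReal.mul_ne_top (by simp) ?_
    refine MSeqAux.tsum_pow_div_ne_top _ ?_ K (by omega)
    rw [ENNReal.inv_lt_one]
    exact_mod_cast hq2
  have hae := MeasureTheory.ae_eventually_notMem hsum
  filter_upwards [hae] with a ha
  have hev : ∀ᶠ n in Filter.atTop,
      -(ε / 4) ≤ (dev M F a n : ℝ) / n ∧ (dev M F a n : ℝ) / n ≤ 3 * ε / 4 := by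
    filter_upwards [ha, Filter.eventually_ge_atTop (max 1 ⌈(8 : ℝ) / ε⌉₊)] with n hnot hN
    have hn1 : 1 ≤ n := le_trans (le_max_left _ _) hN
    have hn8 : (8 : ℝ) / ε ≤ (n : ℝ) :=
      le_trans (Nat.le_ceil _) (by exact_mod_cast le_trans (le_max_right _ _) hN)
    simp only [hBad, Set.mem_union, Set.mem_setOf_eq, not_or, not_le, not_lt] at hnot
    obtain ⟨h1, h2⟩ := hnot
    have hMq : (0 : ℚ) < (M : ℚ) + 1 := by positivity
    have e1 : (M + 1) * (n * M / (M + 1)) + (n * M) % (M + 1) = n * M :=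
      Nat.div_add_mod (n * M) (M + 1)
    have hNat1' : (n * M / (M + 1)) * (M + 1) ≤ n * M := by
      rw [Nat.mul_comm]; exact Nat.le.intro e1
    have hNat2 : n * M ≤ (n * M / (M + 1) + 1) * (M + 1) := by
      have e2 : (n * M) % (M + 1) ≤ M := by
        have := Nat.mod_lt (n * M) (y := M + 1) (by omega)
        omega
      calc n * M = (M + 1) * (n * M / (M + 1)) + (n * M) % (M + 1) := e1.symm
        _ ≤ (M + 1) * (n * M / (M + 1)) + (M + 1) := Nat.add_le_add_left (by omega) _
        _ = (n * M / (M + 1) + 1) * (M + 1) := by ring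
    have hkK0 : (n / K) * K ≤ n := Nat.div_mul_le_self n K
    generalize hg : n * M / (M + 1) = g at h1 h2 hNat1' hNat2
    generalize hk : n / K = k at h1 h2 hkK0
    have hceil1 : (g : ℤ) ≤ ⌈((n : ℚ) * (M : ℚ)) / ((M : ℚ) + 1)⌉ := by
      have hx1 : ((g : ℕ) : ℚ) ≤ ((n : ℚ) * (M : ℚ)) / ((M : ℚ) + 1) := by
        rw [le_div_iff₀ hMq]
        calc ((g : ℕ) : ℚ) * ((M : ℚ) + 1) = ((g * (M + 1) : ℕ) : ℚ) := by push_cast; ring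
          _ ≤ ((n * M : ℕ) : ℚ) := by exact_mod_cast hNat1'
          _ = (n : ℚ) * (M : ℚ) := by push_cast; ring
      have h' := le_trans hx1 (Int.le_ceil (((n : ℚ) * (M : ℚ)) / ((M : ℚ) + 1)))
      exact_mod_cast h'
    have hceil2 : ⌈((n : ℚ) * (M : ℚ)) / ((M : ℚ) + 1)⌉ ≤ (g : ℤ) + 1 := by
      rw [Int.ceil_le, div_le_iff₀ hMq]
      calc (n : ℚ) * (M : ℚ) = ((n * M : ℕ) : ℚ) := by push_cast; ring
        _ ≤ (((g + 1) * (M + 1) : ℕ) : ℚ) := by exact_mod_cast hNat2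
        _ = (((g : ℤ) + 1 : ℤ) : ℚ) * ((M : ℚ) + 1) := by push_cast; ring
    have hd1 : -((k : ℕ) : ℤ) ≤ dev M F a n := by
      simp only [MSeq.dev]
      omega
    have hd2 : dev M F a n ≤ 2 * ((k : ℕ) : ℤ) + 2 := by
      simp only [MSeq.dev]
      omega
    have hn0 : (0 : ℝ) < (n : ℝ) := by exact_mod_cast hn1
    have hkK : ((k : ℕ) : ℝ) * (K : ℝ) ≤ (n : ℝ) := by exact_mod_cast hkK0
    have hεK : 4 ≤ ε * K := by
      have := (div_le_iff₀ hε).mp hKe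
      linarith
    have hk0 : (0 : ℝ) ≤ ((k : ℕ) : ℝ) := by positivity
    have hk4 : 4 * ((k : ℕ) : ℝ) ≤ ε * (n : ℝ) := by
      nlinarith [hkK, hεK, hk0, hε.le]
    have h8 : 8 ≤ ε * (n : ℝ) := by
      have := (div_le_iff₀ hε).mp hn8
      linarith
    constructor
    · rw [le_div_iff₀ hn0]
      have hdc : -(((k : ℕ) : ℝ)) ≤ (dev M F a n : ℝ) := by
        have := (Int.cast_le (R := ℝ)).mpr hd1
        push_cast at this
        exact this
      linarith
    · rw [div_le_iff₀ hn0]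
      have hdc : (dev M F a n : ℝ) ≤ 2 * ((k : ℕ) : ℝ) + 2 := by
        have := (Int.cast_le (R := ℝ)).mpr hd2
        push_cast at this
        exact this
      linarith
  have hub : ∀ᶠ n in Filter.atTop, (dev M F a n : ℝ) / n ≤ 3 * ε / 4 :=
    hev.mono fun n h => h.2
  have hlb : ∀ᶠ n in Filter.atTop, -(ε / 4) ≤ (dev M F a n : ℝ) / n :=
    hev.mono fun n h => h.1
  have hBa : Filter.IsBoundedUnder (· ≤ ·) Filter.atTop
      (fun n : ℕ => (dev M F a n : ℝ) / n) := Filter.isBoundedUnder_of_eventually_le hub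
  have hBb : Filter.IsBoundedUnder (· ≥ ·) Filter.atTop
      (fun n : ℕ => (dev M F a n : ℝ) / n) := Filter.isBoundedUnder_of_eventually_ge hlb
  refine ⟨?_, Filter.liminf_le_limsup hBa hBb, ?_⟩
  · have hl := Filter.le_liminf_of_le hBa.isCoboundedUnder_ge hlb
    have : -ε < -(ε / 4) := by linarith
    exact lt_of_lt_of_le this hl
  · have hl := Filter.limsup_le_of_le hBb.isCoboundedUnder_le hub
    have : 3 * ε / 4 < ε := by linarith
    exact lt_of_le_of_lt hl this
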